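/- For any two probability distributions P and Q on a finite set with d_TV(P,Q) = ε < 1 and P, Q mutually absolutely continuous (so the Jeffreys divergence is finite), J(P,Q) = (D(P‖Q) + D(Q‖P))/2 ≥ ε·log((1+ε)/(1-ε)). -/

import Mathlib

/-!
With weights `w x = (P x + Q x) / 2` and `t x = |P x - Q x| / (P x + Q x)`, each summand of the
Jeffreys divergence is `w x * φ (t x)` for `φ t = t * log ((1 + t) / (1 - t))`, while
`∑ w x * t x = ε`. Since `φ t = g (1 + t) + g (1 - t)` with the convex `g u = (u - 1) * log u`,
`φ` is convex on `(-1, 1)`, and Jensen's inequality gives `J(P, Q) ≥ φ ε`.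
-/

open Real Set

theorem convexOn_sub_one_mul_log : ConvexOn ℝ (Ioi 0) fun u : ℝ => (u - 1) * log u :=
  ((convexOn_mul_log.subset Ioi_subset_Ici_self (convex_Ioi 0)).add
    strictConcaveOn_log_Ioi.concaveOn.neg).congr fun u _ => by
      simp only [Pi.add_apply, Pi.neg_apply]; ring

theorem convexOn_mul_log_one_add_div_one_sub :
    ConvexOn ℝ (Ioo (-1) 1) fun t : ℝ => t * log ((1 + t) / (1 - t)) := by
  have hg := convexOn_sub_one_mul_log.translate_right 1
  have hplus : ConvexOn ℝ (Ioo (-1) 1) fun t : ℝ => (1 + t - 1) * log (1 + t) :=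
    hg.subset (fun t ht => by simp only [mem_preimage, mem_Ioi]; linarith [ht.1]) (convex_Ioo _ _)
  have hminus : ConvexOn ℝ (Ioo (-1) 1) fun t : ℝ => (1 + -t - 1) * log (1 + -t) :=
    (hg.comp_linearMap (-LinearMap.id)).subset
      (fun t ht => by
        simp only [mem_preimage, mem_Ioi, LinearMap.neg_apply, LinearMap.id_apply]
        linarith [ht.2])
      (convex_Ioo _ _)
  refine (hplus.add hminus).congr fun t ht => ?_
  have : 0 < 1 + t := by linarith [ht.1]
  have : 0 < 1 - t := by linarith [ht.2]
  simp only [Pi.add_apply]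
  rw [← sub_eq_add_neg, log_div (by positivity) (by positivity)]
  ring

theorem abs_mul_log_one_add_div_one_sub (r : ℝ) :
    |r| * log ((1 + |r|) / (1 - |r|)) = r * log ((1 + r) / (1 - r)) := by
  rcases le_total 0 r with hr | hr
  · rw [abs_of_nonneg hr]
  · have hinv : (1 + -r) / (1 - -r) = ((1 + r) / (1 - r))⁻¹ := by rw [inv_div]; ring
    rw [abs_of_nonpos hr, hinv, log_inv, neg_mul_neg]

theorem abs_sub_div_add_lt_one {p q : ℝ} (hp : 0 ≤ p) (hq : 0 ≤ q) (hpq : p = 0 ↔ q = 0) :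
    |p - q| / (p + q) < 1 := by
  rcases hp.eq_or_lt with rfl | hp
  · simp [hpq.1 rfl]
  have hq : 0 < q := hq.lt_of_ne (Ne.symm (mt hpq.2 hp.ne'))
  rw [div_lt_one (by positivity), abs_lt]
  constructor <;> linarith

theorem add_div_two_mul_abs_sub_div_add {p q : ℝ} (hp : 0 ≤ p) (hq : 0 ≤ q) :
    (p + q) / 2 * (|p - q| / (p + q)) = 1 / 2 * |p - q| := by
  rcases (add_nonneg hp hq).eq_or_lt with h | h
  · obtain ⟨rfl, rfl⟩ : p = 0 ∧ q = 0 := ⟨by linarith, by linarith⟩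
    simp
  · field_simp

theorem mul_log_div_add_mul_log_div_eq {p q : ℝ} (hp : 0 ≤ p) (hq : 0 ≤ q)
    (hpq : p = 0 ↔ q = 0) :
    p * log (p / q) + q * log (q / p) =
      (p + q) * (|p - q| / (p + q) * log ((1 + |p - q| / (p + q)) / (1 - |p - q| / (p + q)))) := by
  rcases hp.eq_or_lt with rfl | hp
  · simp [hpq.1 rfl]
  have hq : 0 < q := hq.lt_of_ne (Ne.symm (mt hpq.2 hp.ne'))
  have hs : 0 < p + q := by positivity
  have hratio : (1 + (p - q) / (p + q)) / (1 - (p - q) / (p + q)) = p / q := by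
    rw [one_add_div hs.ne', one_sub_div hs.ne', div_div_div_cancel_right₀ hs.ne',
      div_eq_div_iff (by linarith) hq.ne']
    ring
  have habs : |p - q| / (p + q) = |(p - q) / (p + q)| := by rw [abs_div, abs_of_pos hs]
  rw [habs, abs_mul_log_one_add_div_one_sub, hratio, ← inv_div q, log_inv]
  field_simp
  ring

theorem jeffreys_divergence_lower_bound_general {α : Type*} [Fintype α] (P Q : α → ℝ)
    (hP : ∀ x, 0 ≤ P x) (hQ : ∀ x, 0 ≤ Q x)
    (hPsum : ∑ x, P x = 1) (hQsum : ∑ x, Q x = 1)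
    (hac : ∀ x, P x = 0 ↔ Q x = 0)
    (ε : ℝ) (hε : ε = (1 / 2) * ∑ x, |P x - Q x|) :
    ((∑ x, P x * Real.log (P x / Q x)) + (∑ x, Q x * Real.log (Q x / P x))) / 2
      ≥ ε * Real.log ((1 + ε) / (1 - ε)) := by
  set w : α → ℝ := fun x => (P x + Q x) / 2
  set t : α → ℝ := fun x => |P x - Q x| / (P x + Q x)
  have hw : ∑ x, w x = 1 := by
    simp only [w, ← Finset.sum_div, Finset.sum_add_distrib, hPsum, hQsum]
    norm_num
  have ht : ∀ x ∈ Finset.univ, t x ∈ Ioo (-1) 1 := fun x _ =>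
    ⟨by linarith [div_nonneg (abs_nonneg (P x - Q x)) (add_nonneg (hP x) (hQ x))],
      abs_sub_div_add_lt_one (hP x) (hQ x) (hac x)⟩
  have hwt : ∑ x, w x • t x = ε := by
    rw [hε, Finset.mul_sum]
    exact Finset.sum_congr rfl fun x _ => add_div_two_mul_abs_sub_div_add (hP x) (hQ x)
  have hJ : ∑ x, w x • (t x * log ((1 + t x) / (1 - t x))) =
      ((∑ x, P x * log (P x / Q x)) + (∑ x, Q x * log (Q x / P x))) / 2 := by
    rw [← Finset.sum_add_distrib, Finset.sum_div]
    refine Finset.sum_congr rfl fun x _ => ?_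
    rw [mul_log_div_add_mul_log_div_eq (hP x) (hQ x) (hac x), smul_eq_mul]
    ring
  have := convexOn_mul_log_one_add_div_one_sub.map_sum_le
    (fun x _ => div_nonneg (add_nonneg (hP x) (hQ x)) zero_le_two) hw ht
  rwa [hwt, hJ] at this

theorem jeffreys_divergence_lower_bound {α : Type*} [Fintype α] (P Q : α → ℝ)
    (hP : ∀ x, 0 ≤ P x) (hQ : ∀ x, 0 ≤ Q x)
    (hPsum : ∑ x, P x = 1) (hQsum : ∑ x, Q x = 1)
    (hac : ∀ x, P x = 0 ↔ Q x = 0)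
    (ε : ℝ) (hε : ε = (1 / 2) * ∑ x, |P x - Q x|) (hε1 : ε < 1) :
    ((∑ x, P x * Real.log (P x / Q x)) + (∑ x, Q x * Real.log (Q x / P x))) / 2
      ≥ ε * Real.log ((1 + ε) / (1 - ε)) :=
  jeffreys_divergence_lower_bound_general P Q hP hQ hPsum hQsum hac ε hε
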